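/- Let d ≥ 1, v > 0, a > 0, and let π be a probability density on ℝ^d with finite first moment ∫ ‖μ₀‖ π(μ₀) dμ₀ < ∞. Define the marginal density p(x) = ∫ π(μ₀) k(x; a μ₀, v) dμ₀. Fix x ∈ ℝ^d with p(x) > 0 and define the posterior mean μ̄₀(x) = (1/p(x)) ∫ μ₀ π(μ₀) k(x; a μ₀, v) dμ₀. Then p is differentiable at x and μ̄₀(x) = (1/a)·(x + v ∇ log p(x)). -/

import Mathlib

open MeasureTheory

noncomputable section

/-!
Differentiating under the integral sign, which the finite first moment of `π` justifies because
the kernel is bounded and `∇ₓ k(x; m, v) = k(x; m, v) (m − x) / v`, gives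
`∇p(x) = v⁻¹ (a ∫ μ₀ π(μ₀) k(x; a μ₀, v) dμ₀ − p(x) x)`, and dividing by `p(x)` gives
`∇ log p(x) = v⁻¹ (a μ̄₀(x) − x)`.
-/

/-- The Gaussian kernel `k(x; m, v) = (2πv)^{-d/2} exp(-‖x − m‖²/(2v))` on `ℝ^d`. -/
def gaussK (d : ℕ) (v : ℝ) (m x : EuclideanSpace ℝ (Fin d)) : ℝ :=
  (2 * Real.pi * v) ^ (-(d : ℝ) / 2) * Real.exp (-‖x - m‖ ^ 2 / (2 * v))

theorem HasGradientAt.log {F : Type*} [NormedAddCommGroup F] [InnerProductSpace ℝ F]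
    [CompleteSpace F] {f : F → ℝ} {f' x : F} (hf : HasGradientAt f f' x) (hx : f x ≠ 0) :
    HasGradientAt (fun y => Real.log (f y)) ((f x)⁻¹ • f') x := by
  rw [hasGradientAt_iff_hasFDerivAt, map_smul]
  exact (hasGradientAt_iff_hasFDerivAt.mp hf).log hx

theorem integral_mul_smul_smul_sub {α E : Type*} [MeasurableSpace α] {μ : Measure α}
    [NormedAddCommGroup E] [NormedSpace ℝ E] [CompleteSpace E] {w : α → ℝ} {f : α → E}
    (hw : Integrable w μ) (hwf : Integrable (fun t => w t • f t) μ) (a c : ℝ) (x : E) :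
    ∫ t, (w t * c) • (a • f t - x) ∂μ = c • (a • ∫ t, w t • f t ∂μ - (∫ t, w t ∂μ) • x) := by
  have hpt : ∀ t, (w t * c) • (a • f t - x) = c • (a • (w t • f t) - w t • x) := fun t => by
    match_scalars <;> ring
  simp only [hpt]
  rw [integral_smul, integral_sub (f := fun t => a • (w t • f t)) (hwf.smul a) (hw.smul_const x),
    integral_smul, integral_smul_const]

section GaussianKernel

variable {d : ℕ} {v : ℝ}

theorem gaussK_nonneg (hv : 0 ≤ v) (m y : EuclideanSpace ℝ (Fin d)) : 0 ≤ gaussK d v m y := by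
  unfold gaussK
  positivity

theorem gaussK_le (hv : 0 ≤ v) (m y : EuclideanSpace ℝ (Fin d)) :
    gaussK d v m y ≤ (2 * Real.pi * v) ^ (-(d : ℝ) / 2) := by
  unfold gaussK
  have hexp : Real.exp (-‖y - m‖ ^ 2 / (2 * v)) ≤ 1 :=
    Real.exp_le_one_iff.mpr (div_nonpos_of_nonpos_of_nonneg (by nlinarith [norm_nonneg (y - m)])
      (by positivity))
  exact mul_le_of_le_one_right (by positivity) hexp

theorem continuous_gaussK (y : EuclideanSpace ℝ (Fin d)) : Continuous fun m => gaussK d v m y := by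
  unfold gaussK
  fun_prop

theorem hasGradientAt_gaussK (m y : EuclideanSpace ℝ (Fin d)) :
    HasGradientAt (gaussK d v m) ((gaussK d v m y * v⁻¹) • (m - y)) y := by
  have hsq := ((hasFDerivAt_id y).sub_const m).norm_sq
  simp only [id, ContinuousLinearMap.comp_id] at hsq
  have hexponent : HasFDerivAt (fun z => -‖z - m‖ ^ 2 / (2 * v))
      ((-(2 * v)⁻¹) • (2 • innerSL ℝ (y - m))) y := by
    have hfun : (fun z => -‖z - m‖ ^ 2 / (2 * v)) = fun z => -(2 * v)⁻¹ * ‖z - m‖ ^ 2 := by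
      funext z
      ring
    exact hfun ▸ hsq.const_mul _
  rw [hasGradientAt_iff_hasFDerivAt]
  refine (hexponent.exp.const_mul ((2 * Real.pi * v) ^ (-(d : ℝ) / 2))).congr_fderiv ?_
  ext z
  simp only [gaussK, InnerProductSpace.toDual_apply_apply, smul_apply, innerSL_apply_apply,
    smul_eq_mul, nsmul_eq_mul, real_inner_smul_left, ← neg_sub y m, inner_neg_left]
  push_cast
  ring

theorem abs_gaussK_le (hv : 0 ≤ v) (m y : EuclideanSpace ℝ (Fin d)) :
    |gaussK d v m y| ≤ (2 * Real.pi * v) ^ (-(d : ℝ) / 2) := by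
  rw [abs_of_nonneg (gaussK_nonneg hv m y)]
  exact gaussK_le hv m y

variable {π : EuclideanSpace ℝ (Fin d) → ℝ} {a : ℝ}

theorem integrable_mul_gaussK (hv : 0 ≤ v) (hπ : Integrable π) (y : EuclideanSpace ℝ (Fin d)) :
    Integrable fun μ => π μ * gaussK d v (a • μ) y :=
  hπ.mul_bdd ((continuous_gaussK y).comp (continuous_const_smul a)).aestronglyMeasurable
    (.of_forall fun _ => abs_gaussK_le hv _ y)

theorem integrable_mul_gaussK_smul (hv : 0 ≤ v) (hπ : Integrable π)
    (hmom : Integrable fun μ => ‖μ‖ * π μ) (y : EuclideanSpace ℝ (Fin d)) :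
    Integrable fun μ => (π μ * gaussK d v (a • μ) y) • μ := by
  refine (hmom.norm.const_mul ((2 * Real.pi * v) ^ (-(d : ℝ) / 2))).mono'
    ((integrable_mul_gaussK hv hπ y).aestronglyMeasurable.smul aestronglyMeasurable_id)
    (.of_forall fun μ => ?_)
  rw [norm_smul, norm_mul, norm_mul, norm_norm, Real.norm_eq_abs (gaussK _ _ _ _)]
  calc ‖π μ‖ * |gaussK d v (a • μ) y| * ‖μ‖
      ≤ ‖π μ‖ * (2 * Real.pi * v) ^ (-(d : ℝ) / 2) * ‖μ‖ := by
        gcongr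
        exact abs_gaussK_le hv _ y
    _ = _ := by ring

theorem norm_mul_gaussK_smul_sub_le (hv : 0 ≤ v) {x y : EuclideanSpace ℝ (Fin d)}
    (hy : y ∈ Metric.ball x 1) (μ : EuclideanSpace ℝ (Fin d)) :
    ‖(π μ * gaussK d v (a • μ) y * v⁻¹) • (a • μ - y)‖ ≤
      (2 * Real.pi * v) ^ (-(d : ℝ) / 2) * v⁻¹ *
        (|a| * ‖‖μ‖ * π μ‖ + (‖x‖ + 1) * ‖π μ‖) := by
  have hy_norm : ‖y‖ ≤ ‖x‖ + 1 := by
    have := norm_le_norm_add_norm_sub' y x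
    rw [mem_ball_iff_norm] at hy
    linarith
  have hdist : ‖a • μ - y‖ ≤ |a| * ‖μ‖ + (‖x‖ + 1) := by
    calc ‖a • μ - y‖ ≤ ‖a • μ‖ + ‖y‖ := norm_sub_le _ _
      _ ≤ |a| * ‖μ‖ + (‖x‖ + 1) := by rw [norm_smul, Real.norm_eq_abs]; linarith
  rw [norm_smul, norm_mul, norm_mul, norm_mul, norm_norm, Real.norm_eq_abs (gaussK _ _ _ _),
    norm_inv, Real.norm_of_nonneg hv]
  calc ‖π μ‖ * |gaussK d v (a • μ) y| * v⁻¹ * ‖a • μ - y‖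
      ≤ ‖π μ‖ * (2 * Real.pi * v) ^ (-(d : ℝ) / 2) * v⁻¹ * (|a| * ‖μ‖ + (‖x‖ + 1)) := by
        gcongr
        exact abs_gaussK_le hv _ y
    _ = _ := by ring

theorem hasGradientAt_integral_mul_gaussK (hv : 0 ≤ v) (hπ : Integrable π)
    (hmom : Integrable fun μ => ‖μ‖ * π μ) (a : ℝ) (x : EuclideanSpace ℝ (Fin d)) :
    HasGradientAt (fun y => ∫ μ, π μ * gaussK d v (a • μ) y)
      (∫ μ, (π μ * gaussK d v (a • μ) x * v⁻¹) • (a • μ - x)) x := by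
  set toDual := InnerProductSpace.toDual ℝ (EuclideanSpace ℝ (Fin d))
  rw [hasGradientAt_iff_hasFDerivAt, ← toDual.coe_toContinuousLinearEquiv,
    ← ContinuousLinearEquiv.integral_comp_comm, toDual.coe_toContinuousLinearEquiv]
  have hscore_meas : AEStronglyMeasurable
      (fun μ => (π μ * gaussK d v (a • μ) x * v⁻¹) • (a • μ - x)) :=
    ((integrable_mul_gaussK hv hπ x).aestronglyMeasurable.mul_const _).smul
      (by fun_prop : Continuous fun μ : EuclideanSpace ℝ (Fin d) => a • μ - x).aestronglyMeasurable
  refine hasFDerivAt_integral_of_dominated_of_fderiv_le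
    (F' := fun y μ => toDual ((π μ * gaussK d v (a • μ) y * v⁻¹) • (a • μ - y)))
    (bound := fun μ => (2 * Real.pi * v) ^ (-(d : ℝ) / 2) * v⁻¹ *
      (|a| * ‖‖μ‖ * π μ‖ + (‖x‖ + 1) * ‖π μ‖))
    (Metric.ball_mem_nhds x one_pos)
    (.of_forall fun y => (integrable_mul_gaussK hv hπ y).aestronglyMeasurable)
    (integrable_mul_gaussK hv hπ x)
    (toDual.continuous.comp_aestronglyMeasurable hscore_meas)
    (.of_forall fun μ y hy => ?_) ?_ (.of_forall fun μ y _ => ?_)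
  · rw [LinearIsometryEquiv.norm_map]
    exact norm_mul_gaussK_smul_sub_le hv hy μ
  · exact ((hmom.norm.const_mul |a|).add (hπ.norm.const_mul (‖x‖ + 1))).const_mul _
  · refine (hasGradientAt_iff_hasFDerivAt.mp
      (hasGradientAt_gaussK (a • μ) y)).const_mul (π μ) |>.congr_fderiv ?_
    rw [← map_smul, smul_smul, mul_assoc]

end GaussianKernel

theorem tweedie_vp_general
    (d : ℕ) (v : ℝ) (hv : 0 < v) (a : ℝ) (ha : 0 < a)
    (π : EuclideanSpace ℝ (Fin d) → ℝ)
    (hπ_int : ∫ μ₀, π μ₀ = 1)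
    (h_mom : Integrable (fun μ₀ => ‖μ₀‖ * π μ₀))
    (p : EuclideanSpace ℝ (Fin d) → ℝ)
    (hp : ∀ x', p x' = ∫ μ₀, π μ₀ * gaussK d v (a • μ₀) x')
    (x : EuclideanSpace ℝ (Fin d)) (hp_pos : 0 < p x)
    (μbar₀ : EuclideanSpace ℝ (Fin d))
    (hμbar₀ : μbar₀ = (p x)⁻¹ • ∫ μ₀, (π μ₀ * gaussK d v (a • μ₀) x) • μ₀) :
    DifferentiableAt ℝ p x ∧
      μbar₀ = a⁻¹ • (x + v • gradient (fun x' => Real.log (p x')) x) := by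
  have hπ : Integrable π := .of_integral_ne_zero (by simp [hπ_int])
  obtain rfl : p = fun y => ∫ μ, π μ * gaussK d v (a • μ) y := funext hp
  have hgrad := hasGradientAt_integral_mul_gaussK hv.le hπ h_mom a x
  refine ⟨hgrad.differentiableAt, ?_⟩
  rw [(hgrad.log hp_pos.ne').gradient,
    integral_mul_smul_smul_sub (integrable_mul_gaussK hv.le hπ x)
      (integrable_mul_gaussK_smul hv.le hπ h_mom x), hμbar₀]
  match_scalars <;> field_simp; ring

/-- **Tweedie's formula for the variance-preserving (DDPM) Gaussian transition kernel.**
If `p(x) = ∫ π(μ₀) k(x; a μ₀, v) dμ₀` is the marginal of a prior density `π` with finite first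
moment under Gaussian noising with mean shrink factor `a > 0` and variance `v > 0`, and
`p(x) > 0`, then `p` is differentiable at `x` and the posterior mean satisfies
`μ̄₀(x) = (1/a)(x + v ∇ log p(x))`. -/
theorem tweedie_vp
    (d : ℕ) (hd : 1 ≤ d) (v : ℝ) (hv : 0 < v) (a : ℝ) (ha : 0 < a)
    (π : EuclideanSpace ℝ (Fin d) → ℝ)
    (hπ_meas : Measurable π) (hπ_nonneg : ∀ μ₀, 0 ≤ π μ₀)
    (hπ_int : ∫ μ₀, π μ₀ = 1)
    (h_mom : Integrable (fun μ₀ => ‖μ₀‖ * π μ₀))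
    (p : EuclideanSpace ℝ (Fin d) → ℝ)
    (hp : ∀ x', p x' = ∫ μ₀, π μ₀ * gaussK d v (a • μ₀) x')
    (x : EuclideanSpace ℝ (Fin d)) (hp_pos : 0 < p x)
    (μbar₀ : EuclideanSpace ℝ (Fin d))
    (hμbar₀ : μbar₀ = (p x)⁻¹ • ∫ μ₀, (π μ₀ * gaussK d v (a • μ₀) x) • μ₀) :
    DifferentiableAt ℝ p x ∧
      μbar₀ = a⁻¹ • (x + v • gradient (fun x' => Real.log (p x')) x) :=
  tweedie_vp_general d v hv a ha π hπ_int h_mom p hp x hp_pos μbar₀ hμbar₀
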